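/- Let G=(V,E) be a redundant-free st-DAG with at least two vertices, with source s and target t. Then the set of all edges of E with start vertex s is a Fullsyncpoint, and the set of all edges of E with end vertex t is a Fullsyncpoint. -/

import Mathlib

open Set

variable {V : Type*}

/-- Predecessor set of a vertex. -/
def preds (E : Set (V × V)) (v : V) : Set V := {u | (u, v) ∈ E}

/-- Successor set of a vertex. -/
def succs (E : Set (V × V)) (u : V) : Set V := {w | (u, w) ∈ E}

/-- A digraph is acyclic: no vertex lies on a nonempty directed cycle. -/
def IsAcyclicDigraph (E : Set (V × V)) : Prop :=
  ∀ v : V, ¬ Relation.TransGen (fun a b => (a, b) ∈ E) v v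

/-- `s` is the unique vertex with no incoming edge. -/
def IsSourceOf (E : Set (V × V)) (s : V) : Prop :=
  preds E s = ∅ ∧ ∀ v, preds E v = ∅ → v = s

/-- `t` is the unique vertex with no outgoing edge. -/
def IsTargetOf (E : Set (V × V)) (t : V) : Prop :=
  succs E t = ∅ ∧ ∀ v, succs E v = ∅ → v = t

/-- A set of in-twins: all elements have the identical set of predecessors. -/
def InTwins (E : Set (V × V)) (S : Set V) : Prop :=
  ∀ v ∈ S, ∀ w ∈ S, preds E v = preds E w

/-- A set of out-twins: all elements have the identical set of successors. -/
def OutTwins (E : Set (V × V)) (P : Set V) : Prop :=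
  ∀ u ∈ P, ∀ w ∈ P, succs E u = succs E w

/-- `P_X`: the set of start vertices of the edges of `X`. -/
def startSet (X : Set (V × V)) : Set V := {u | ∃ v, (u, v) ∈ X}

/-- `S_X`: the set of end vertices of the edges of `X`. -/
def endSet (X : Set (V × V)) : Set V := {v | ∃ u, (u, v) ∈ X}

/-- Condition (a) of the syncpoint definition. -/
def CondA (E X : Set (V × V)) : Prop :=
  (∀ u ∈ startSet X, ∀ v ∈ endSet X, (u, v) ∈ E → (u, v) ∈ X) ∧
  ((endSet X).ncard = 1 ∨ InTwins E (endSet X)) ∧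
  (∀ v ∈ endSet X, preds E v = startSet X)

/-- Condition (b) of the syncpoint definition. -/
def CondB (E X : Set (V × V)) : Prop :=
  (∀ u ∈ startSet X, ∀ v ∈ endSet X, (u, v) ∈ E → (u, v) ∈ X) ∧
  ((startSet X).ncard = 1 ∨ OutTwins E (startSet X)) ∧
  (∀ u ∈ startSet X, succs E u = endSet X)

/-- Fullsyncpoint: a nonempty edge set satisfying both (a) and (b). -/
def IsFSP (E X : Set (V × V)) : Prop :=
  X.Nonempty ∧ X ⊆ E ∧ CondA E X ∧ CondB E X

/-- Forward-Halfsyncpoint: (a) holds and `|S_X| ≥ 2`. -/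
def IsFHSP (E X : Set (V × V)) : Prop :=
  X.Nonempty ∧ X ⊆ E ∧ CondA E X ∧ 2 ≤ (endSet X).ncard

/-- Backward-Halfsyncpoint: (b) holds and `|P_X| ≥ 2`. -/
def IsBHSP (E X : Set (V × V)) : Prop :=
  X.Nonempty ∧ X ⊆ E ∧ CondB E X ∧ 2 ≤ (startSet X).ncard

/-- A syncpoint is an FSP, FHSP or BHSP. -/
def IsSyncpoint (E X : Set (V × V)) : Prop :=
  IsFSP E X ∨ IsFHSP E X ∨ IsBHSP E X

/-- Maximum Syncpoint: a syncpoint that is not a proper subset of another syncpoint. -/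
def IsMSP (E X : Set (V × V)) : Prop :=
  IsSyncpoint E X ∧ ∀ Y, IsSyncpoint E Y → ¬ X ⊂ Y

/-- An edge-path: a nonempty list of edges, consecutive edges sharing endpoints. -/
def IsEdgePath (E : Set (V × V)) (p : List (V × V)) : Prop :=
  p ≠ [] ∧ (∀ e ∈ p, e ∈ E) ∧ p.Chain' (fun e f => e.2 = f.1)

/-- The vertex-path of an edge-path. -/
def vertexPath (p : List (V × V)) : List V :=
  match p with
  | [] => []
  | e :: rest => e.1 :: (e :: rest).map Prod.snd

/-- An st-path: an edge-path starting at `s` and ending at `t`. -/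
def IsStPath (E : Set (V × V)) (s t : V) (p : List (V × V)) : Prop :=
  IsEdgePath E p ∧ (∃ e, p.head? = some e ∧ e.1 = s) ∧
    (∃ e, p.getLast? = some e ∧ e.2 = t)

/-- An edge `(u,v) ∈ E` is redundant if there is a directed path from `u` to `v`
not containing the edge `(u,v)`. -/
def IsRedundant (E : Set (V × V)) (e : V × V) : Prop :=
  e ∈ E ∧ ∃ p, IsEdgePath E p ∧ e ∉ p ∧
    (∃ f, p.head? = some f ∧ f.1 = e.1) ∧ (∃ f, p.getLast? = some f ∧ f.2 = e.2)

/-- A graph is redundant-free if it has no redundant edge. -/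
def RedundantFree (E : Set (V × V)) : Prop := ∀ e, ¬ IsRedundant E e

/-- Entry vertices of the subgraph induced by `V'` (in an st-DAG with source `s`). -/
def entrySet (E : Set (V × V)) (s : V) (V' : Set V) : Set V :=
  {v | v ∈ V' ∧ ((∃ u, u ∉ V' ∧ (u, v) ∈ E) ∨ v = s)}

/-- Exit vertices of the subgraph induced by `V'` (in an st-DAG with target `t`). -/
def exitSet (E : Set (V × V)) (t : V) (V' : Set V) : Set V :=
  {v | v ∈ V' ∧ ((∃ w, w ∉ V' ∧ (v, w) ∈ E) ∨ v = t)}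

/-- The induced subgraph of `V'` is a cluster. -/
def IsCluster (E : Set (V × V)) (s t : V) (V' : Set V) : Prop :=
  2 ≤ (entrySet E s V').ncard ∧ 2 ≤ (exitSet E t V').ncard ∧
  entrySet E s V' ∩ exitSet E t V' = ∅ ∧
  InTwins E (entrySet E s V') ∧ OutTwins E (exitSet E t V')

/-!
Every vertex of a finite DAG is reachable from the unique source and reaches the unique target.
In a DAG, an edge `(a, b)` is redundant as soon as some third vertex `c` satisfies
`a ⟶⁺ c ⟶⁺ b`. So if `(s, v)` is an edge and `u ≠ s` is another predecessor of `v`, then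
`s ⟶⁺ u ⟶ v` makes `(s, v)` redundant: every successor of `s` has `s` as its only
predecessor, which is exactly what the FSP conditions ask of the edges leaving `s`.
Dually for the edges entering `t`.
-/

open Relation

variable {E : Set (V × V)}

local notation:50 a " ⟶[" E "]⁺ " b => TransGen (fun x y => (x, y) ∈ E) a b
local notation:50 a " ⟶[" E "]* " b => ReflTransGen (fun x y => (x, y) ∈ E) a b

def outEdges (E : Set (V × V)) (a : V) : Set (V × V) := {e | e ∈ E ∧ e.1 = a}

def inEdges (E : Set (V × V)) (b : V) : Set (V × V) := {e | e ∈ E ∧ e.2 = b}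

section Paths

/-- The invariant on the edges is what lets us show that a path avoids a given edge. -/
theorem exists_edgePath_of_transGen {a b : V} (h : a ⟶[E]⁺ b) :
    ∃ p, IsEdgePath E p ∧ (∃ f, p.head? = some f ∧ f.1 = a) ∧
      (∃ f, p.getLast? = some f ∧ f.2 = b) ∧ ∀ e ∈ p, (a ⟶[E]* e.1) ∧ (e.2 ⟶[E]* b) := by
  induction h using TransGen.head_induction_on with
  | @single a hab =>
    refine ⟨[(a, b)], ⟨by simp, by simpa using hab, List.isChain_singleton _⟩, ⟨_, rfl, rfl⟩,
      ⟨_, rfl, rfl⟩, ?_⟩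
    simp only [List.mem_singleton, forall_eq]
    exact ⟨.refl, .refl⟩
  | @head a c hac hcb ih =>
    obtain ⟨p, ⟨-, hpE, hchain⟩, ⟨f, hf, rfl⟩, ⟨g, hg, rfl⟩, hreach⟩ := ih
    refine ⟨(a, f.1) :: p, ⟨by simp, ?_, ?_⟩, ⟨_, rfl, rfl⟩, ⟨g, ?_, rfl⟩, ?_⟩
    · exact fun e he => (List.mem_cons.mp he).elim (· ▸ hac) (hpE e)
    · exact List.isChain_cons.mpr ⟨by simp [hf], hchain⟩
    · rw [List.getLast?_cons, hg]; rfl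
    · simp only [List.forall_mem_cons]
      exact ⟨⟨.refl, hcb.to_reflTransGen⟩,
        fun e he => ⟨.head hac (hreach e he).1, (hreach e he).2⟩⟩

theorem isRedundant_of_transGen_of_transGen (hacyc : IsAcyclicDigraph E) {a b c : V}
    (hab : (a, b) ∈ E) (hac : a ⟶[E]⁺ c) (hcb : c ⟶[E]⁺ b) : IsRedundant E (a, b) := by
  obtain ⟨p, ⟨hp, hpE, hpchain⟩, ⟨f, hf, hfa⟩, ⟨g, hg, hgc⟩, hpreach⟩ :=
    exists_edgePath_of_transGen hac
  obtain ⟨q, ⟨-, hqE, hqchain⟩, ⟨f', hf', hf'c⟩, ⟨g', hg', hg'b⟩, hqreach⟩ :=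
    exists_edgePath_of_transGen hcb
  refine ⟨hab, p ++ q, ⟨by simp [hp], ?_, ?_⟩, ?_, ⟨f, ?_, hfa⟩, ⟨g', ?_, hg'b⟩⟩
  · exact fun e he => (List.mem_append.mp he).elim (hpE e) (hqE e)
  · exact List.isChain_append.mpr ⟨hpchain, hqchain, by simp [hg, hf', hgc, hf'c]⟩
  · -- `(a, b)` on the first part would give `b ⟶* c ⟶⁺ b`, on the second `a ⟶⁺ c ⟶* a`.
    rw [List.mem_append]
    rintro (hmem | hmem)
    · exact hacyc b (TransGen.trans_right (hpreach _ hmem).2 hcb)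
    · exact hacyc a (hac.trans_left (hqreach _ hmem).1)
  · rw [List.head?_append, hf]; rfl
  · rw [List.getLast?_append, hg']; rfl

end Paths

section Reachability

variable [Finite V]

theorem IsAcyclicDigraph.wellFounded (hacyc : IsAcyclicDigraph E) :
    WellFounded fun x y : V => (x, y) ∈ E :=
  have : Std.Irrefl (TransGen fun x y : V => (x, y) ∈ E) := ⟨hacyc⟩
  Subrelation.wf (fun h => TransGen.single h)
    (Finite.wellFounded_of_trans_of_irrefl (TransGen fun x y : V => (x, y) ∈ E))

theorem IsAcyclicDigraph.wellFounded_swap (hacyc : IsAcyclicDigraph E) :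
    WellFounded fun x y : V => (y, x) ∈ E :=
  have : Std.Irrefl (TransGen fun x y : V => (y, x) ∈ E) :=
    ⟨fun v hv => hacyc v (transGen_swap.mp hv)⟩
  Subrelation.wf (fun h => TransGen.single h)
    (Finite.wellFounded_of_trans_of_irrefl (TransGen fun x y : V => (y, x) ∈ E))

theorem IsSourceOf.reflTransGen (hacyc : IsAcyclicDigraph E) {s : V} (hs : IsSourceOf E s)
    (v : V) : s ⟶[E]* v := by
  induction v using hacyc.wellFounded.induction with
  | _ v ih =>
    by_cases hvs : v = s
    · exact hvs ▸ .refl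
    · obtain ⟨u, hu⟩ := nonempty_iff_ne_empty.mpr fun h => hvs (hs.2 v h)
      exact (ih u hu).tail hu

theorem IsTargetOf.reflTransGen (hacyc : IsAcyclicDigraph E) {t : V} (ht : IsTargetOf E t)
    (v : V) : v ⟶[E]* t := by
  induction v using hacyc.wellFounded_swap.induction with
  | _ v ih =>
    by_cases hvt : v = t
    · exact hvt ▸ .refl
    · obtain ⟨w, hw⟩ := nonempty_iff_ne_empty.mpr fun h => hvt (ht.2 v h)
      exact .head hw (ih w hw)

theorem IsSourceOf.transGen (hacyc : IsAcyclicDigraph E) {s v : V} (hs : IsSourceOf E s)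
    (hv : v ≠ s) : s ⟶[E]⁺ v :=
  (reflTransGen_iff_eq_or_transGen.mp (hs.reflTransGen hacyc v)).resolve_left hv

theorem IsTargetOf.transGen (hacyc : IsAcyclicDigraph E) {t v : V} (ht : IsTargetOf E t)
    (hv : v ≠ t) : v ⟶[E]⁺ t :=
  (reflTransGen_iff_eq_or_transGen.mp (ht.reflTransGen hacyc v)).resolve_left hv.symm

theorem IsSourceOf.succs_nonempty [Nontrivial V] (hacyc : IsAcyclicDigraph E) {s : V}
    (hs : IsSourceOf E s) : (succs E s).Nonempty := by
  obtain ⟨v, hv⟩ := exists_ne s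
  obtain ⟨w, hsw, -⟩ := TransGen.head'_iff.mp (hs.transGen hacyc hv)
  exact ⟨w, hsw⟩

theorem IsTargetOf.preds_nonempty [Nontrivial V] (hacyc : IsAcyclicDigraph E) {t : V}
    (ht : IsTargetOf E t) : (preds E t).Nonempty := by
  obtain ⟨v, hv⟩ := exists_ne t
  obtain ⟨u, -, hut⟩ := TransGen.tail'_iff.mp (ht.transGen hacyc hv)
  exact ⟨u, hut⟩

theorem IsSourceOf.preds_eq_singleton (hacyc : IsAcyclicDigraph E) (hred : RedundantFree E)
    {s v : V} (hs : IsSourceOf E s) (hsv : v ∈ succs E s) : preds E v = {s} := by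
  refine subset_antisymm (fun u huv => ?_) (singleton_subset_iff.mpr hsv)
  by_contra hus
  exact hred _ (isRedundant_of_transGen_of_transGen hacyc hsv (hs.transGen hacyc hus) (.single huv))

theorem IsTargetOf.succs_eq_singleton (hacyc : IsAcyclicDigraph E) (hred : RedundantFree E)
    {t u : V} (ht : IsTargetOf E t) (hut : u ∈ preds E t) : succs E u = {t} := by
  refine subset_antisymm (fun w huw => ?_) (singleton_subset_iff.mpr hut)
  by_contra hwt
  exact hred _ (isRedundant_of_transGen_of_transGen hacyc hut (.single huw) (ht.transGen hacyc hwt))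

end Reachability

section Stars

theorem startSet_outEdges {a : V} (h : (succs E a).Nonempty) :
    startSet (outEdges E a) = {a} := by
  obtain ⟨w, hw⟩ := h
  ext u
  simp only [startSet, outEdges, mem_ofPred_eq, mem_singleton_iff]
  exact ⟨fun ⟨_, _, hu⟩ => hu, fun hu => ⟨w, hu ▸ hw, hu⟩⟩

theorem endSet_outEdges (a : V) : endSet (outEdges E a) = succs E a := by
  ext v
  simp [endSet, outEdges, succs]

theorem startSet_inEdges (b : V) : startSet (inEdges E b) = preds E b := by
  ext u
  simp [startSet, inEdges, preds]

theorem endSet_inEdges {b : V} (h : (preds E b).Nonempty) :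
    endSet (inEdges E b) = {b} := by
  obtain ⟨u, hu⟩ := h
  ext v
  simp only [endSet, inEdges, mem_ofPred_eq, mem_singleton_iff]
  exact ⟨fun ⟨_, _, hv⟩ => hv, fun hv => ⟨u, hv ▸ hu, hv⟩⟩

theorem isFSP_outEdges {a : V} (hne : (succs E a).Nonempty)
    (hpreds : ∀ v ∈ succs E a, preds E v = {a}) : IsFSP E (outEdges E a) := by
  obtain ⟨w, hw⟩ := hne
  rw [IsFSP, CondA, CondB, startSet_outEdges ⟨w, hw⟩, endSet_outEdges]
  have hclosed : ∀ u ∈ ({a} : Set V), ∀ v ∈ succs E a, (u, v) ∈ E → (u, v) ∈ outEdges E a :=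
    fun _ hu _ _ huv => ⟨huv, hu⟩
  refine ⟨⟨(a, w), hw, rfl⟩, fun _ he => he.1, ⟨hclosed, ?_, ?_⟩, ⟨hclosed, ?_, ?_⟩⟩
  · exact .inr fun v hv v' hv' => (hpreds v hv).trans (hpreds v' hv').symm
  · exact hpreds
  · exact .inl (ncard_singleton a)
  · simp

theorem isFSP_inEdges {b : V} (hne : (preds E b).Nonempty)
    (hsuccs : ∀ u ∈ preds E b, succs E u = {b}) : IsFSP E (inEdges E b) := by
  obtain ⟨u, hu⟩ := hne
  rw [IsFSP, CondA, CondB, startSet_inEdges, endSet_inEdges ⟨u, hu⟩]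
  have hclosed : ∀ u ∈ preds E b, ∀ v ∈ ({b} : Set V), (u, v) ∈ E → (u, v) ∈ inEdges E b :=
    fun _ _ _ hv huv => ⟨huv, hv⟩
  refine ⟨⟨(u, b), hu, rfl⟩, fun _ he => he.1, ⟨hclosed, ?_, ?_⟩, ⟨hclosed, ?_, ?_⟩⟩
  · exact .inl (ncard_singleton b)
  · simp
  · exact .inr fun v hv v' hv' => (hsuccs v hv).trans (hsuccs v' hv').symm
  · exact hsuccs

end Stars

theorem source_target_edges_are_fsp_general
    {V : Type*} [Fintype V] (E : Set (V × V)) (s t : V)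
    (hacyc : IsAcyclicDigraph E) (hs : IsSourceOf E s) (ht : IsTargetOf E t)
    (hred : RedundantFree E) (hcard : 2 ≤ Fintype.card V) :
    IsFSP E {e | e ∈ E ∧ e.1 = s} ∧ IsFSP E {e | e ∈ E ∧ e.2 = t} := by
  have : Nontrivial V := Fintype.one_lt_card_iff_nontrivial.mp hcard
  exact ⟨isFSP_outEdges (hs.succs_nonempty hacyc) fun _ => hs.preds_eq_singleton hacyc hred,
    isFSP_inEdges (ht.preds_nonempty hacyc) fun _ => ht.succs_eq_singleton hacyc hred⟩

/-- In a redundant-free st-DAG with at least two vertices, the edges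
leaving the source form a FSP, and the edges entering the target form a FSP. -/
theorem source_target_edges_are_fsp
    {V : Type*} [Fintype V] [Nonempty V] (E : Set (V × V)) (s t : V)
    (hacyc : IsAcyclicDigraph E) (hs : IsSourceOf E s) (ht : IsTargetOf E t)
    (hred : RedundantFree E) (hcard : 2 ≤ Fintype.card V) :
    IsFSP E {e | e ∈ E ∧ e.1 = s} ∧ IsFSP E {e | e ∈ E ∧ e.2 = t} :=
  source_target_edges_are_fsp_general E s t hacyc hs ht hred hcard
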